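/- arXiv:2410.08756 — 4 statements merged into one kernel-verified Lean document; each statement's English description precedes it below -/
import Mathlib

section
/- Let p, n, q, d be positive integers. Let P̂ be a real symmetric positive definite (p+n)×(p+n) matrix partitioned in blocks as P̂ = [[P₁, P₁₂],[P₂₁, P₂ + Σ]] with P₁ ∈ ℝ^{p×p} and P₂, Σ ∈ ℝ^{n×n} symmetric, and let L = [[L₁₁, 0],[L₂₁, G]] with L₁₁ ∈ ℝ^{p×q}, L₂₁ ∈ ℝ^{n×q}, G ∈ ℝ^{n×d}. Define A := P₂ − P₂₁P₁⁻¹P₁₂ + (L₂₁ − P₂₁P₁⁻¹L₁₁)(L₁₁ᵀP₁⁻¹L₁₁)⁻¹(L₂₁ᵀ − L₁₁ᵀP₁⁻¹P₁₂). Assume the matrices L₁₁ᵀP₁⁻¹L₁₁, LᵀP̂⁻¹L, and Gᵀ(Σ+A)⁻¹G are invertible. Then the bottom-right d×d block of (LᵀP̂⁻¹L)⁻¹, namely (0 I_d)(LᵀP̂⁻¹L)⁻¹(0 I_d)ᵀ, equals (Gᵀ(Σ+A)⁻¹G)⁻¹. (Paper's Theorem 2: explicit expression of the Cramér–Rao lower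 bound B(d_{k−1}) with respect to the perturbation covariance Σ.) -/
/-!
Positivity of `P̂` forces `P₂₁ = P₁₂ᵀ` and makes `P₁` and its Schur complement
`Δ = P₂ + Σ - P₂₁ P₁⁻¹ P₁₂` positive definite. Inverting `P̂` blockwise about `P₁` shows that
`Lᵀ P̂⁻¹ L` has blocks `W = C + Kᵀ Δ⁻¹ K`, `Kᵀ Δ⁻¹ G`, `Gᵀ Δ⁻¹ K`, `Gᵀ Δ⁻¹ G`, where
`C = L₁₁ᵀ P₁⁻¹ L₁₁` and `K = L₂₁ - P₂₁ P₁⁻¹ L₁₁`; here `W ⪰ C ≻ 0` is invertible. The bottom-right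
block of the inverse is then the inverse of the Schur complement `Gᵀ (Δ⁻¹ - Δ⁻¹ K W⁻¹ Kᵀ Δ⁻¹) G`,
and by the Woodbury identity the middle factor is `(Δ + K C⁻¹ Kᵀ)⁻¹ = (Σ + A)⁻¹`.
-/

open Matrix
open scoped ComplexOrder

namespace Matrix

section CommRing

variable {k l m n R : Type*} [Fintype m] [Fintype n] [DecidableEq m] [DecidableEq n] [CommRing R]

theorem inv_fromBlocks_of_isUnit₁₁ {A : Matrix m m R} {B : Matrix m n R} {C : Matrix n m R}
    {D : Matrix n n R} (hA : IsUnit A) (hS : IsUnit (D - C * A⁻¹ * B)) :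
    (fromBlocks A B C D)⁻¹ =
      fromBlocks (A⁻¹ + A⁻¹ * B * (D - C * A⁻¹ * B)⁻¹ * C * A⁻¹)
        (-(A⁻¹ * B * (D - C * A⁻¹ * B)⁻¹))
        (-((D - C * A⁻¹ * B)⁻¹ * C * A⁻¹)) ((D - C * A⁻¹ * B)⁻¹) := by
  have := hA.invertible
  have := hS.invertible
  rw [← invOf_eq_nonsing_inv A] at this
  let := fromBlocks₁₁Invertible A B C D
  rw [← invOf_eq_nonsing_inv, invOf_fromBlocks₁₁_eq]
  simp only [invOf_eq_nonsing_inv]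

/-- No invertibility of the Schur complement is needed: if it is singular, so is the block
matrix, and both sides are the junk value `0`. -/
theorem toBlocks₂₂_inv_fromBlocks_of_isUnit₁₁ {A : Matrix m m R} (hA : IsUnit A)
    (B : Matrix m n R) (C : Matrix n m R) (D : Matrix n n R) :
    ((fromBlocks A B C D)⁻¹).toBlocks₂₂ = (D - C * A⁻¹ * B)⁻¹ := by
  by_cases hS : IsUnit (D - C * A⁻¹ * B)
  · rw [inv_fromBlocks_of_isUnit₁₁ hA hS, toBlocks_fromBlocks₂₂]
  · have := hA.invertible
    have hM : ¬IsUnit (fromBlocks A B C D) := by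
      rwa [isUnit_fromBlocks_iff_of_invertible₁₁, invOf_eq_nonsing_inv]
    rw [isUnit_iff_isUnit_det] at hS hM
    rw [nonsing_inv_apply_not_isUnit _ hM, nonsing_inv_apply_not_isUnit _ hS]
    rfl

theorem fromBlocks_zero₁₂_transpose_mul_inv_mul {P : Matrix m m R} {P₁₂ : Matrix m n R}
    {P₂₁ : Matrix n m R} {D Δ : Matrix n n R} (hP : IsUnit P) (hΔ : D - P₂₁ * P⁻¹ * P₁₂ = Δ)
    (hΔu : IsUnit Δ) (L₁₁ : Matrix m k R) (L₂₁ : Matrix n k R) (G : Matrix n l R) :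
    (fromBlocks L₁₁ 0 L₂₁ G)ᵀ * (fromBlocks P P₁₂ P₂₁ D)⁻¹ * fromBlocks L₁₁ 0 L₂₁ G =
      fromBlocks
        (L₁₁ᵀ * P⁻¹ * L₁₁ + (L₂₁ᵀ - L₁₁ᵀ * P⁻¹ * P₁₂) * Δ⁻¹ * (L₂₁ - P₂₁ * P⁻¹ * L₁₁))
        ((L₂₁ᵀ - L₁₁ᵀ * P⁻¹ * P₁₂) * Δ⁻¹ * G) (Gᵀ * Δ⁻¹ * (L₂₁ - P₂₁ * P⁻¹ * L₁₁))
        (Gᵀ * Δ⁻¹ * G) := by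
  subst hΔ
  rw [inv_fromBlocks_of_isUnit₁₁ hP hΔu, fromBlocks_transpose, transpose_zero,
    fromBlocks_multiply, fromBlocks_multiply]
  congr 1 <;>
    simp only [Matrix.sub_mul, Matrix.mul_sub, Matrix.add_mul, Matrix.mul_add, Matrix.mul_assoc,
      Matrix.neg_mul, Matrix.mul_neg, Matrix.zero_mul, Matrix.mul_zero, zero_add, add_zero] <;>
    abel

theorem toBlocks₂₂_inv_fromBlocks_add_mul_inv_mul [Fintype k] [DecidableEq k] [Fintype l]
    [DecidableEq l] {Δ : Matrix n n R} {C : Matrix k k R} {K : Matrix n k R} {K' : Matrix k n R}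
    (hΔ : IsUnit Δ) (hC : IsUnit C) (hW : IsUnit (C + K' * Δ⁻¹ * K))
    (G : Matrix n l R) (G' : Matrix l n R) :
    ((fromBlocks (C + K' * Δ⁻¹ * K) (K' * Δ⁻¹ * G) (G' * Δ⁻¹ * K) (G' * Δ⁻¹ * G))⁻¹).toBlocks₂₂ =
      (G' * (Δ + K * C⁻¹ * K')⁻¹ * G)⁻¹ := by
  have hC' : C⁻¹⁻¹ = C := nonsing_inv_nonsing_inv C ((isUnit_iff_isUnit_det C).mp hC)
  rw [toBlocks₂₂_inv_fromBlocks_of_isUnit₁₁ hW, add_mul_mul_inv_eq_sub Δ K C⁻¹ K' hΔ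
    (isUnit_nonsing_inv_iff.mpr hC) (by rwa [hC']), hC']
  simp only [Matrix.mul_sub, Matrix.sub_mul, Matrix.mul_assoc]

end CommRing

theorem PosDef.of_fromBlocks₁₁ {m n R : Type*} [Ring R] [PartialOrder R] [StarRing R]
    {A : Matrix m m R} {B : Matrix m n R} {C : Matrix n m R} {D : Matrix n n R}
    (h : (fromBlocks A B C D).PosDef) : A.PosDef :=
  h.submatrix Sum.inl_injective

theorem PosDef.schur_complement_of_fromBlocks {m n 𝕜 : Type*} [Fintype m] [Fintype n]
    [DecidableEq m] [DecidableEq n] [RCLike 𝕜] {A : Matrix m m 𝕜} {B : Matrix m n 𝕜}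
    {C : Matrix n m 𝕜} {D : Matrix n n 𝕜} (h : (fromBlocks A B C D).PosDef) :
    (D - C * A⁻¹ * B).PosDef := by
  have hA := h.of_fromBlocks₁₁
  have := hA.isUnit.invertible
  obtain ⟨-, rfl, -, -⟩ := isHermitian_fromBlocks_iff.mp h.isHermitian
  refine ((PosDef.fromBlocks₁₁ B D hA).mp h.posSemidef).posDef_iff_isUnit.mpr ?_
  simpa [invOf_eq_nonsing_inv] using isUnit_fromBlocks_iff_of_invertible₁₁.mp h.isUnit

end Matrix

theorem crlb_explicit_expression_general
    (p n q d : ℕ)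
    (P₁ : Matrix (Fin p) (Fin p) ℝ) (P₁₂ : Matrix (Fin p) (Fin n) ℝ)
    (P₂₁ : Matrix (Fin n) (Fin p) ℝ) (P₂ Sg : Matrix (Fin n) (Fin n) ℝ)
    (hPhat : (Matrix.fromBlocks P₁ P₁₂ P₂₁ (P₂ + Sg)).PosDef)
    (L₁₁ : Matrix (Fin p) (Fin q) ℝ) (L₂₁ : Matrix (Fin n) (Fin q) ℝ)
    (G : Matrix (Fin n) (Fin d) ℝ)
    (A : Matrix (Fin n) (Fin n) ℝ)
    (hA : A = P₂ - P₂₁ * P₁⁻¹ * P₁₂ +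
      (L₂₁ - P₂₁ * P₁⁻¹ * L₁₁) * (L₁₁ᵀ * P₁⁻¹ * L₁₁)⁻¹ *
        (L₂₁ᵀ - L₁₁ᵀ * P₁⁻¹ * P₁₂))
    (h1 : IsUnit (L₁₁ᵀ * P₁⁻¹ * L₁₁).det) :
    (((Matrix.fromBlocks L₁₁ 0 L₂₁ G)ᵀ *
        (Matrix.fromBlocks P₁ P₁₂ P₂₁ (P₂ + Sg))⁻¹ *
        (Matrix.fromBlocks L₁₁ 0 L₂₁ G))⁻¹).toBlocks₂₂ =
      (Gᵀ * (Sg + A)⁻¹ * G)⁻¹ := by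
  have hP₁ : P₁.PosDef := hPhat.of_fromBlocks₁₁
  have hΔ := hPhat.schur_complement_of_fromBlocks
  obtain ⟨hP₁symm, hP₁₂, -, -⟩ := isHermitian_fromBlocks_iff.mp hPhat.isHermitian
  rw [conjTranspose_eq_transpose_of_trivial] at hP₁₂
  have hC : (L₁₁ᵀ * P₁⁻¹ * L₁₁).PosDef := by
    refine PosSemidef.posDef_iff_isUnit ?_ |>.mpr ((isUnit_iff_isUnit_det _).mpr h1)
    simpa using hP₁.inv.posSemidef.conjTranspose_mul_mul_same L₁₁
  have hK : (L₂₁ - P₂₁ * P₁⁻¹ * L₁₁)ᴴ = L₂₁ᵀ - L₁₁ᵀ * P₁⁻¹ * P₁₂ := by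
    rw [conjTranspose_eq_transpose_of_trivial, transpose_sub, transpose_mul, transpose_mul,
      transpose_nonsing_inv, ← conjTranspose_eq_transpose_of_trivial P₁, hP₁symm.eq, ← hP₁₂,
      transpose_transpose, Matrix.mul_assoc]
  have hW := hC.add_posSemidef (hK ▸ hΔ.inv.posSemidef.conjTranspose_mul_mul_same
    (L₂₁ - P₂₁ * P₁⁻¹ * L₁₁))
  have hSgA : Sg + A = P₂ + Sg - P₂₁ * P₁⁻¹ * P₁₂ + (L₂₁ - P₂₁ * P₁⁻¹ * L₁₁) *
      (L₁₁ᵀ * P₁⁻¹ * L₁₁)⁻¹ * (L₂₁ᵀ - L₁₁ᵀ * P₁⁻¹ * P₁₂) := by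
    rw [hA]; abel
  rw [fromBlocks_zero₁₂_transpose_mul_inv_mul hP₁.isUnit rfl hΔ.isUnit,
    toBlocks₂₂_inv_fromBlocks_add_mul_inv_mul hΔ.isUnit hC.isUnit hW.isUnit, hSgA]

/-- Paper's Theorem 2: explicit expression of the Cramér–Rao lower bound
`B(d_{k−1})` with respect to the perturbation covariance `Σ`:
the bottom-right `d × d` block of `(Lᵀ P̂⁻¹ L)⁻¹` equals `(Gᵀ (Σ + A)⁻¹ G)⁻¹`. -/
theorem crlb_explicit_expression
    (p n q d : ℕ) (hp : 0 < p) (hn : 0 < n) (hq : 0 < q) (hd : 0 < d)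
    (P₁ : Matrix (Fin p) (Fin p) ℝ) (P₁₂ : Matrix (Fin p) (Fin n) ℝ)
    (P₂₁ : Matrix (Fin n) (Fin p) ℝ) (P₂ Sg : Matrix (Fin n) (Fin n) ℝ)
    (hP₂ : P₂.IsSymm) (hSg : Sg.IsSymm)
    (hPhat : (Matrix.fromBlocks P₁ P₁₂ P₂₁ (P₂ + Sg)).PosDef)
    (L₁₁ : Matrix (Fin p) (Fin q) ℝ) (L₂₁ : Matrix (Fin n) (Fin q) ℝ)
    (G : Matrix (Fin n) (Fin d) ℝ)
    (A : Matrix (Fin n) (Fin n) ℝ)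
    (hA : A = P₂ - P₂₁ * P₁⁻¹ * P₁₂ +
      (L₂₁ - P₂₁ * P₁⁻¹ * L₁₁) * (L₁₁ᵀ * P₁⁻¹ * L₁₁)⁻¹ *
        (L₂₁ᵀ - L₁₁ᵀ * P₁⁻¹ * P₁₂))
    (h1 : IsUnit (L₁₁ᵀ * P₁⁻¹ * L₁₁).det)
    (h2 : IsUnit ((Matrix.fromBlocks L₁₁ 0 L₂₁ G)ᵀ *
        (Matrix.fromBlocks P₁ P₁₂ P₂₁ (P₂ + Sg))⁻¹ *
        (Matrix.fromBlocks L₁₁ 0 L₂₁ G)).det)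
    (h3 : IsUnit (Gᵀ * (Sg + A)⁻¹ * G).det) :
    (((Matrix.fromBlocks L₁₁ 0 L₂₁ G)ᵀ *
        (Matrix.fromBlocks P₁ P₁₂ P₂₁ (P₂ + Sg))⁻¹ *
        (Matrix.fromBlocks L₁₁ 0 L₂₁ G))⁻¹).toBlocks₂₂ =
      (Gᵀ * (Sg + A)⁻¹ * G)⁻¹ :=
  crlb_explicit_expression_general p n q d P₁ P₁₂ P₂₁ P₂ Sg hPhat L₁₁ L₂₁ G A hA h1
end

section
/- Let (Ω, F, P) be a probability space and n, m, d positive integers. Let x, x̂ : Ω → ℝ^n be random vectors with square-integrable components, let w : Ω → ℝ^n and v : Ω → ℝ^m be random vectors with square-integrable components such that w is independent of the pair (x, x̂) with E[w] = 0, and v is independent of the triple (x, x̂, w) with E[v] = 0. Let F ∈ ℝ^{n×n}, G ∈ ℝ^{n×d}, H ∈ ℝ^{m×n}, K ∈ ℝ^{n×m}, D ∈ ℝ^{n×n} be matrices and d̄ ∈ ℝ^d a deterministic vector. Define x⁺ := F x + G d̄ + w, y := H x⁺ + v, and x̂⁺ := D x̂ + K y. Then Cov(x⁺, x̂⁺)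 = F Cov(x, x̂) Dᵀ + Cov(x⁺) Hᵀ Kᵀ. (Paper's Theorem 3, equation (36): recursion for the cross-covariance between the state and the unbiased minimum-variance estimate.) -/
/-! The cross-covariance matrix is bilinear, ignores deterministic shifts, satisfies
`Cov(A X, Y) = A Cov(X, Y)` and `Cov(X, B Y) = Cov(X, Y) Bᵀ`, and vanishes for independent
vectors. Since `w` is independent of `x̂`, `Cov(x⁺, x̂) = F Cov(x, x̂)`; since `x⁺` is a measurable
function of `(x, x̂, w)`, it is independent of `v`. Expanding `x̂⁺ = D x̂ + K H x⁺ + K v` in the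
second argument then gives the recursion. -/

open Matrix MeasureTheory ProbabilityTheory

noncomputable def cov {Ω : Type*} [MeasurableSpace Ω] (μ : Measure Ω) {p q : ℕ}
    (X : Ω → Fin p → ℝ) (Y : Ω → Fin q → ℝ) : Matrix (Fin p) (Fin q) ℝ :=
  Matrix.of fun i j =>
    ∫ ω, (X ω i - ∫ ω', X ω' i ∂μ) * (Y ω j - ∫ ω', Y ω' j ∂μ) ∂μ

section CrossCovariance

variable {Ω : Type*} [MeasurableSpace Ω] {μ : Measure Ω} {p q r : ℕ}

theorem cov_apply (X : Ω → Fin p → ℝ) (Y : Ω → Fin q → ℝ) (i : Fin p) (j : Fin q) :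
    cov μ X Y i j = covariance (fun ω => X ω i) (fun ω => Y ω j) μ :=
  rfl

theorem cov_transpose (X : Ω → Fin p → ℝ) (Y : Ω → Fin q → ℝ) :
    (cov μ X Y)ᵀ = cov μ Y X := by
  ext i j
  simp only [transpose_apply, cov_apply, covariance_comm]

theorem memLp_mulVec_apply {s : ENNReal} (A : Matrix (Fin p) (Fin q) ℝ) {X : Ω → Fin q → ℝ}
    (hX : ∀ k, MemLp (fun ω => X ω k) s μ) (i : Fin p) :
    MemLp (fun ω => (A *ᵥ X ω) i) s μ := by
  simp only [mulVec, dotProduct]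
  exact memLp_finsetSum _ fun k _ => (hX k).const_mul _

theorem ProbabilityTheory.IndepFun.cov_eq_zero {X : Ω → Fin p → ℝ} {Y : Ω → Fin q → ℝ}
    (h : IndepFun X Y μ)
    (hX : ∀ i, MemLp (fun ω => X ω i) 2 μ) (hY : ∀ j, MemLp (fun ω => Y ω j) 2 μ) :
    cov μ X Y = 0 := by
  ext i j
  exact (h.comp (measurable_pi_apply i) (measurable_pi_apply j)).covariance_eq_zero (hX i) (hY j)

theorem cov_mulVec_left [IsFiniteMeasure μ] (A : Matrix (Fin p) (Fin r) ℝ) {X : Ω → Fin r → ℝ}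
    {Y : Ω → Fin q → ℝ} (hX : ∀ k, MemLp (fun ω => X ω k) 2 μ)
    (hY : ∀ j, MemLp (fun ω => Y ω j) 2 μ) :
    cov μ (fun ω => A *ᵥ X ω) Y = A * cov μ X Y := by
  ext i j
  simp only [cov_apply, mul_apply, mulVec, dotProduct]
  rw [covariance_fun_sum_left (fun k => (hX k).const_mul (A i k)) (hY j)]
  simp only [covariance_const_mul_left]

theorem cov_mulVec_right [IsFiniteMeasure μ] (A : Matrix (Fin q) (Fin r) ℝ)
    {X : Ω → Fin p → ℝ} {Y : Ω → Fin r → ℝ} (hX : ∀ i, MemLp (fun ω => X ω i) 2 μ)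
    (hY : ∀ k, MemLp (fun ω => Y ω k) 2 μ) :
    cov μ X (fun ω => A *ᵥ Y ω) = cov μ X Y * Aᵀ := by
  rw [← cov_transpose, cov_mulVec_left A hY hX, transpose_mul, cov_transpose]

theorem cov_add_left [IsFiniteMeasure μ] {X X' : Ω → Fin p → ℝ} {Y : Ω → Fin q → ℝ}
    (hX : ∀ i, MemLp (fun ω => X ω i) 2 μ) (hX' : ∀ i, MemLp (fun ω => X' ω i) 2 μ)
    (hY : ∀ j, MemLp (fun ω => Y ω j) 2 μ) :
    cov μ (fun ω => X ω + X' ω) Y = cov μ X Y + cov μ X' Y := by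
  ext i j
  exact covariance_add_left (hX i) (hX' i) (hY j)

theorem cov_add_right [IsFiniteMeasure μ] {X : Ω → Fin p → ℝ} {Y Y' : Ω → Fin q → ℝ}
    (hX : ∀ i, MemLp (fun ω => X ω i) 2 μ) (hY : ∀ j, MemLp (fun ω => Y ω j) 2 μ)
    (hY' : ∀ j, MemLp (fun ω => Y' ω j) 2 μ) :
    cov μ X (fun ω => Y ω + Y' ω) = cov μ X Y + cov μ X Y' := by
  ext i j
  exact covariance_add_right (hX i) (hY j) (hY' j)

theorem cov_add_const_left [IsProbabilityMeasure μ] {X : Ω → Fin p → ℝ} {Y : Ω → Fin q → ℝ}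
    (hX : ∀ i, Integrable (fun ω => X ω i) μ) (c : Fin p → ℝ) :
    cov μ (fun ω => X ω + c) Y = cov μ X Y := by
  ext i j
  exact covariance_add_const_left (hX i) (c i)

theorem cov_mulVec_add_const_add_left [IsProbabilityMeasure μ] (A : Matrix (Fin p) (Fin r) ℝ)
    (c : Fin p → ℝ) {X : Ω → Fin r → ℝ} {W : Ω → Fin p → ℝ} {Y : Ω → Fin q → ℝ}
    (hX : ∀ k, MemLp (fun ω => X ω k) 2 μ) (hW : ∀ i, MemLp (fun ω => W ω i) 2 μ)
    (hY : ∀ j, MemLp (fun ω => Y ω j) 2 μ) (hWY : cov μ W Y = 0) :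
    cov μ (fun ω => A *ᵥ X ω + c + W ω) Y = A * cov μ X Y := by
  have hAX := memLp_mulVec_apply A hX
  have hAXc : ∀ i, MemLp (fun ω => (A *ᵥ X ω + c) i) 2 μ := fun i => (hAX i).add (memLp_const _)
  rw [cov_add_left hAXc hW hY, hWY, add_zero,
    cov_add_const_left (fun i => (hAX i).integrable one_le_two), cov_mulVec_left A hX hY]

theorem cov_mulVec_add_mulVec_add_right [IsFiniteMeasure μ] (B : Matrix (Fin q) (Fin p) ℝ)
    (C : Matrix (Fin q) (Fin r) ℝ) (E : Matrix (Fin r) (Fin p) ℝ) {X : Ω → Fin p → ℝ}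
    {Z : Ω → Fin p → ℝ} {V : Ω → Fin r → ℝ} (hX : ∀ i, MemLp (fun ω => X ω i) 2 μ)
    (hZ : ∀ i, MemLp (fun ω => Z ω i) 2 μ) (hV : ∀ k, MemLp (fun ω => V ω k) 2 μ)
    (hXV : cov μ X V = 0) :
    cov μ X (fun ω => B *ᵥ Z ω + C *ᵥ (E *ᵥ X ω + V ω)) =
      cov μ X Z * Bᵀ + cov μ X X * Eᵀ * Cᵀ := by
  have hCE := memLp_mulVec_apply (C * E) hX
  have hCV := memLp_mulVec_apply C hV
  have hCEV : ∀ i, MemLp (fun ω => ((C * E) *ᵥ X ω + C *ᵥ V ω) i) 2 μ :=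
    fun i => (hCE i).add (hCV i)
  simp only [mulVec_add, mulVec_mulVec]
  rw [cov_add_right hX (memLp_mulVec_apply B hZ) hCEV, cov_add_right hX hCE hCV,
    cov_mulVec_right B hX hZ, cov_mulVec_right _ hX hX, cov_mulVec_right C hX hV, hXV,
    Matrix.zero_mul, add_zero, transpose_mul, Matrix.mul_assoc (cov μ X X)]

end CrossCovariance

theorem cov_state_estimate_cross_recursion_general
    {Ω : Type*} [MeasurableSpace Ω] (μ : Measure Ω) [IsProbabilityMeasure μ]
    (n m d : ℕ)
    (x xhat : Ω → Fin n → ℝ) (w : Ω → Fin n → ℝ) (v : Ω → Fin m → ℝ)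
    (hx2 : ∀ i, MemLp (fun ω => x ω i) 2 μ)
    (hxhat2 : ∀ i, MemLp (fun ω => xhat ω i) 2 μ)
    (hw2 : ∀ i, MemLp (fun ω => w ω i) 2 μ)
    (hv2 : ∀ i, MemLp (fun ω => v ω i) 2 μ)
    (hwindep : IndepFun w (fun ω => (x ω, xhat ω)) μ)
    (hvindep : IndepFun v (fun ω => (x ω, xhat ω, w ω)) μ)
    (F : Matrix (Fin n) (Fin n) ℝ) (G : Matrix (Fin n) (Fin d) ℝ)
    (H : Matrix (Fin m) (Fin n) ℝ) (K : Matrix (Fin n) (Fin m) ℝ)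
    (D : Matrix (Fin n) (Fin n) ℝ) (dbar : Fin d → ℝ)
    (xplus : Ω → Fin n → ℝ)
    (hxplus : xplus = fun ω => F.mulVec (x ω) + G.mulVec dbar + w ω)
    (y : Ω → Fin m → ℝ)
    (hy : y = fun ω => H.mulVec (xplus ω) + v ω)
    (xhatplus : Ω → Fin n → ℝ)
    (hxhatplus : xhatplus = fun ω => D.mulVec (xhat ω) + K.mulVec (y ω)) :
    cov μ xplus xhatplus = F * cov μ x xhat * Dᵀ + cov μ xplus xplus * Hᵀ * Kᵀ := by
  have hxplus2 : ∀ i, MemLp (fun ω => xplus ω i) 2 μ := by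
    subst hxplus
    exact fun i => ((memLp_mulVec_apply F hx2 i).add (memLp_const _)).add (hw2 i)
  have hwxhat : cov μ w xhat = 0 :=
    (hwindep.comp measurable_id measurable_snd).cov_eq_zero hw2 hxhat2
  have hxplusv : cov μ xplus v = 0 := by
    have hstate : Measurable fun z : (Fin n → ℝ) × (Fin n → ℝ) × (Fin n → ℝ) =>
        F *ᵥ z.1 + G *ᵥ dbar + z.2.2 := by fun_prop
    subst hxplus
    exact (hvindep.symm.comp hstate measurable_id).cov_eq_zero hxplus2 hv2
  have hxplus_xhat : cov μ xplus xhat = F * cov μ x xhat := by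
    rw [hxplus, cov_mulVec_add_const_add_left F _ hx2 hw2 hxhat2 hwxhat]
  subst hxhatplus hy
  rw [cov_mulVec_add_mulVec_add_right D K H hxplus2 hxhat2 hv2 hxplusv, hxplus_xhat]

/-- Paper's Theorem 3, equation (36): for `x⁺ = F x + G d̄ + w`, `y = H x⁺ + v`,
`x̂⁺ = D x̂ + K y`, with `w` independent of `(x, x̂)` and `v` independent of
`(x, x̂, w)`, both zero-mean,
`Cov(x⁺, x̂⁺) = F Cov(x, x̂) Dᵀ + Cov(x⁺) Hᵀ Kᵀ`. -/
theorem cov_state_estimate_cross_recursion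
    {Ω : Type*} [MeasurableSpace Ω] (μ : Measure Ω) [IsProbabilityMeasure μ]
    (n m d : ℕ) (hn : 0 < n) (hm : 0 < m) (hd : 0 < d)
    (x xhat : Ω → Fin n → ℝ) (w : Ω → Fin n → ℝ) (v : Ω → Fin m → ℝ)
    (hxmeas : Measurable x) (hxhatmeas : Measurable xhat)
    (hwmeas : Measurable w) (hvmeas : Measurable v)
    (hx2 : ∀ i, MemLp (fun ω => x ω i) 2 μ)
    (hxhat2 : ∀ i, MemLp (fun ω => xhat ω i) 2 μ)
    (hw2 : ∀ i, MemLp (fun ω => w ω i) 2 μ)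
    (hv2 : ∀ i, MemLp (fun ω => v ω i) 2 μ)
    (hwindep : IndepFun w (fun ω => (x ω, xhat ω)) μ)
    (hwmean : ∀ i, ∫ ω, w ω i ∂μ = 0)
    (hvindep : IndepFun v (fun ω => (x ω, xhat ω, w ω)) μ)
    (hvmean : ∀ i, ∫ ω, v ω i ∂μ = 0)
    (F : Matrix (Fin n) (Fin n) ℝ) (G : Matrix (Fin n) (Fin d) ℝ)
    (H : Matrix (Fin m) (Fin n) ℝ) (K : Matrix (Fin n) (Fin m) ℝ)
    (D : Matrix (Fin n) (Fin n) ℝ) (dbar : Fin d → ℝ)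
    (xplus : Ω → Fin n → ℝ)
    (hxplus : xplus = fun ω => F.mulVec (x ω) + G.mulVec dbar + w ω)
    (y : Ω → Fin m → ℝ)
    (hy : y = fun ω => H.mulVec (xplus ω) + v ω)
    (xhatplus : Ω → Fin n → ℝ)
    (hxhatplus : xhatplus = fun ω => D.mulVec (xhat ω) + K.mulVec (y ω)) :
    cov μ xplus xhatplus = F * cov μ x xhat * Dᵀ + cov μ xplus xplus * Hᵀ * Kᵀ :=
  cov_state_estimate_cross_recursion_general μ n m d x xhat w v hx2 hxhat2 hw2 hv2 hwindep hvindep F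
    G H K D dbar xplus hxplus y hy xhatplus hxhatplus
end

section
/- Let n, d be positive integers with d ≤ n, σ > 0 and γ ∈ ℝ. Let G ∈ ℝ^{n×d} have singular value decomposition G = U (Υ 0)ᵀ V, where U ∈ ℝ^{n×n} and V ∈ ℝ^{d×d} are orthogonal and Υ ∈ ℝ^{d×d} is an invertible diagonal matrix ((Υ 0) is d×n). Let Ã ∈ ℝ^{n×n} be symmetric positive semi-definite and partition M := Uᵀ(Ã + σI_n)U = [[Ã₁₁, Ã₁₂],[Ã₂₁, Ã₂₂]] with Ã₁₁ ∈ ℝ^{d×d}. Suppose the symmetric matrix Σ̃₁₁ ∈ ℝ^{d×d} satisfies Σ̃₁₁ ⪰ Ã₁₁ and trace(Υ⁻²(Σ̃₁₁ − Ã₁₂Ã₂₂⁻¹Ã₂₁)) ≥ γ. Define Σ := U · blockdiag(Σ̃₁₁ − Ã₁₁ + σI_d, σI_{n−d}) · Uᵀ. Then: (i) Σ ⪰ σI_n; (ii) Gᵀ(Σ + Ã)⁻¹G is invertible; and (iii) trace((Gᵀ(Σ + Ã)⁻¹G)⁻¹) ≥ γ. (Paper's Theorem 5: the matrix Σ_k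 constructed from a feasible point of the semi-definite program (30) is a feasible — relaxed — solution of the privacy-constrained optimization problem (26).) -/
/-!
Conjugating by `U` turns `Σ + Ã` into
`P = [[Σ̃₁₁, Ã₁₂], [Ã₂₁, Ã₂₂]] = blockdiag(Σ̃₁₁ - Ã₁₁, 0) + M`, which is positive definite because
`M` is. Since `G = U (Υ 0)ᵀ V`, the matrix `Gᵀ (Σ + Ã)⁻¹ G` equals `Vᵀ Υ (P⁻¹)₁₁ Υ V`, and
`(P⁻¹)₁₁` is the inverse of the Schur complement `S = Σ̃₁₁ - Ã₁₂ Ã₂₂⁻¹ Ã₂₁`. So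
`(Gᵀ (Σ + Ã)⁻¹ G)⁻¹ = Vᵀ Υ⁻¹ S Υ⁻¹ V`, whose trace is `trace (Υ⁻² S)`.
-/

open Matrix

namespace Matrix

variable {m n : Type*}

theorem fromBlocks_add_smul_one_zero_smul_one {R : Type*} [Semiring R] [DecidableEq m]
    [DecidableEq n] (X : Matrix m m R) (c : R) :
    fromBlocks (X + c • 1) 0 0 (c • 1 : Matrix n n R) = fromBlocks X 0 0 0 + c • 1 := by
  rw [← fromBlocks_one, fromBlocks_smul, fromBlocks_add]
  simp

theorem fromBlocks_sub_toBlocks₁₁_add {R : Type*} [AddGroup R] (X : Matrix m m R)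
    (M : Matrix (m ⊕ n) (m ⊕ n) R) :
    fromBlocks (X - M.toBlocks₁₁) 0 0 0 + M =
      fromBlocks X M.toBlocks₁₂ M.toBlocks₂₁ M.toBlocks₂₂ := by
  conv_lhs => enter [2]; rw [← fromBlocks_toBlocks M]
  simp only [fromBlocks_add, sub_add_cancel, zero_add]

variable [Fintype m] [Fintype n]

theorem fromCols_zero_mul_mul_transpose {R : Type*} [CommSemiring R] (Υ : Matrix m m R)
    (Q : Matrix (m ⊕ n) (m ⊕ n) R) :
    fromCols Υ (0 : Matrix m n R) * Q * (fromCols Υ (0 : Matrix m n R))ᵀ =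
      Υ * Q.toBlocks₁₁ * Υᵀ := by
  conv_lhs => rw [← fromBlocks_toBlocks Q]
  rw [transpose_fromCols, fromCols_mul_fromBlocks, fromCols_mul_fromRows]
  simp

theorem posSemidef_fromBlocks_zero {R : Type*} [Ring R] [PartialOrder R] [StarRing R]
    [DecidableEq m] {A : Matrix m m R} (hA : A.PosSemidef) :
    (fromBlocks A 0 0 (0 : Matrix n n R)).PosSemidef := by
  have h := hA.mul_mul_conjTranspose_same (fromRows (1 : Matrix m m R) (0 : Matrix n m R))
  rw [conjTranspose_fromRows_eq_fromCols_conjTranspose, fromRows_mul, fromRows_mul_fromCols] at h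
  simpa using h

section Orthogonal

variable [DecidableEq n] {R : Type*} [CommRing R]

theorem PosDef.transpose_mul_mul_of_orthogonal [PartialOrder R] [StarRing R] [TrivialStar R]
    {A U : Matrix n n R} (hA : A.PosDef) (hU : Uᵀ * U = 1) : (Uᵀ * A * U).PosDef := by
  have hinj : Function.Injective U.mulVec :=
    Function.LeftInverse.injective (g := Uᵀ.mulVec) fun x => by rw [mulVec_mulVec, hU, one_mulVec]
  simpa using hA.conjTranspose_mul_mul_same hinj

theorem mul_add_smul_one_mul_transpose_of_orthogonal {U : Matrix n n R} (hU : U * Uᵀ = 1)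
    (X : Matrix n n R) (c : R) : U * (X + c • 1) * Uᵀ = U * X * Uᵀ + c • 1 := by
  rw [Matrix.mul_add, Matrix.add_mul, Matrix.mul_smul, Matrix.smul_mul, Matrix.mul_one, hU]

theorem mul_transpose_mul_mul_mul_transpose_of_orthogonal {U : Matrix n n R}
    (hU : U * Uᵀ = 1) (X : Matrix n n R) : U * (Uᵀ * X * U) * Uᵀ = X := by
  simp only [← Matrix.mul_assoc, hU, Matrix.one_mul]
  rw [Matrix.mul_assoc, hU, Matrix.mul_one]

theorem inv_mul_mul_transpose_of_orthogonal {U : Matrix n n R} (hU : Uᵀ * U = 1)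
    (P : Matrix n n R) : (U * P * Uᵀ)⁻¹ = U * P⁻¹ * Uᵀ := by
  rw [Matrix.mul_inv_rev, Matrix.mul_inv_rev, inv_eq_left_inv hU, inv_eq_right_inv hU,
    Matrix.mul_assoc]

theorem isUnit_det_transpose_mul_mul_of_orthogonal {V Υ S : Matrix n n R} (hV : Vᵀ * V = 1)
    (hΥ : IsUnit Υ.det) (hS : IsUnit S.det) : IsUnit (Vᵀ * (Υ * S⁻¹ * Υ) * V).det := by
  have hVdet := isUnit_det_of_left_inverse hV
  simp only [det_mul, det_transpose]
  exact (hVdet.mul ((hΥ.mul (isUnit_nonsing_inv_det _ hS)).mul hΥ)).mul hVdet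

theorem trace_inv_transpose_mul_mul_of_orthogonal {V Υ S : Matrix n n R} (hV : Vᵀ * V = 1)
    (hS : IsUnit S.det) : ((Vᵀ * (Υ * S⁻¹ * Υ) * V)⁻¹).trace = (Υ⁻¹ ^ 2 * S).trace := by
  have hVt : (Vᵀ)ᵀ * Vᵀ = 1 := by rw [transpose_transpose, mul_eq_one_comm, hV]
  have h := inv_mul_mul_transpose_of_orthogonal hVt (Υ * S⁻¹ * Υ)
  rw [transpose_transpose] at h
  rw [h, trace_mul_cycle, mul_eq_one_comm.mp hV, Matrix.one_mul, Matrix.mul_inv_rev,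
    Matrix.mul_inv_rev, nonsing_inv_nonsing_inv S hS, ← Matrix.mul_assoc, trace_mul_cycle, sq]

end Orthogonal

section SchurComplement

variable [DecidableEq m] [DecidableEq n] {K : Type*} [Field K]
  {A : Matrix m m K} {B : Matrix m n K} {C : Matrix n m K} {D : Matrix n n K}

theorem isUnit_det_sub_mul_inv_mul (hP : IsUnit (fromBlocks A B C D).det) (hD : IsUnit D.det) :
    IsUnit (A - B * D⁻¹ * C).det := by
  have := invertibleOfIsUnitDet D hD
  rw [det_fromBlocks₂₂, invOf_eq_nonsing_inv] at hP
  exact isUnit_of_mul_isUnit_right hP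

theorem toBlocks₁₁_inv_fromBlocks (hP : IsUnit (fromBlocks A B C D).det) (hD : IsUnit D.det) :
    (fromBlocks A B C D)⁻¹.toBlocks₁₁ = (A - B * D⁻¹ * C)⁻¹ := by
  have := invertibleOfIsUnitDet D hD
  have := invertibleOfIsUnitDet _ hP
  have : Invertible (A - B * ⅟D * C) :=
    invertibleOfIsUnitDet _ (by rw [invOf_eq_nonsing_inv]; exact isUnit_det_sub_mul_inv_mul hP hD)
  rw [← invOf_eq_nonsing_inv, invOf_fromBlocks₂₂_eq, toBlocks_fromBlocks₁₁, invOf_eq_nonsing_inv,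
    invOf_eq_nonsing_inv]

theorem transpose_mul_inv_fromBlocks_mul_of_svd {U : Matrix (m ⊕ n) (m ⊕ n) K}
    (hU : Uᵀ * U = 1) (Υ V : Matrix m m K) (hP : IsUnit (fromBlocks A B C D).det)
    (hD : IsUnit D.det) :
    (U * (fromCols Υ (0 : Matrix m n K))ᵀ * V)ᵀ * (U * fromBlocks A B C D * Uᵀ)⁻¹ *
        (U * (fromCols Υ (0 : Matrix m n K))ᵀ * V) =
      Vᵀ * (Υ * (A - B * D⁻¹ * C)⁻¹ * Υᵀ) * V := by
  rw [inv_mul_mul_transpose_of_orthogonal hU, ← toBlocks₁₁_inv_fromBlocks hP hD,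
    ← fromCols_zero_mul_mul_transpose]
  simp only [transpose_mul, transpose_transpose, Matrix.mul_assoc]
  simp only [← Matrix.mul_assoc Uᵀ U, hU, Matrix.one_mul]

end SchurComplement

end Matrix

theorem relaxed_solution_feasible_general
    (d e : ℕ)
    (σ γ : ℝ) (hσ : 0 < σ)
    (U : Matrix (Fin d ⊕ Fin e) (Fin d ⊕ Fin e) ℝ) (hU : Uᵀ * U = 1)
    (V : Matrix (Fin d) (Fin d) ℝ) (hV : Vᵀ * V = 1)
    (Υ : Matrix (Fin d) (Fin d) ℝ) (hΥdiag : Υ.IsDiag) (hΥinv : IsUnit Υ.det)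
    (G : Matrix (Fin d ⊕ Fin e) (Fin d) ℝ)
    (hG : G = U * (Matrix.fromCols Υ (0 : Matrix (Fin d) (Fin e) ℝ))ᵀ * V)
    (Atil : Matrix (Fin d ⊕ Fin e) (Fin d ⊕ Fin e) ℝ) (hAtil : Atil.PosSemidef)
    (M : Matrix (Fin d ⊕ Fin e) (Fin d ⊕ Fin e) ℝ)
    (hM : M = Uᵀ * (Atil + σ • (1 : Matrix (Fin d ⊕ Fin e) (Fin d ⊕ Fin e) ℝ)) * U)
    (Sg₁₁ : Matrix (Fin d) (Fin d) ℝ)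
    (hSgA : (Sg₁₁ - M.toBlocks₁₁).PosSemidef)
    (htr : γ ≤ (Υ⁻¹ ^ 2 *
      (Sg₁₁ - M.toBlocks₁₂ * (M.toBlocks₂₂)⁻¹ * M.toBlocks₂₁)).trace)
    (Sg : Matrix (Fin d ⊕ Fin e) (Fin d ⊕ Fin e) ℝ)
    (hSg : Sg = U * Matrix.fromBlocks
      (Sg₁₁ - M.toBlocks₁₁ + σ • (1 : Matrix (Fin d) (Fin d) ℝ)) 0 0
      (σ • (1 : Matrix (Fin e) (Fin e) ℝ)) * Uᵀ) :
    (Sg - σ • (1 : Matrix (Fin d ⊕ Fin e) (Fin d ⊕ Fin e) ℝ)).PosSemidef ∧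
    IsUnit (Gᵀ * (Sg + Atil)⁻¹ * G).det ∧
    γ ≤ ((Gᵀ * (Sg + Atil)⁻¹ * G)⁻¹).trace := by
  set Δ := fromBlocks (Sg₁₁ - M.toBlocks₁₁) 0 0 (0 : Matrix (Fin e) (Fin e) ℝ)
  have hUUt : U * Uᵀ = 1 := mul_eq_one_comm.mp hU
  have hΔ : Δ.PosSemidef := posSemidef_fromBlocks_zero hSgA
  have hMpd : M.PosDef :=
    hM ▸ (PosDef.posSemidef_add hAtil (PosDef.one.smul hσ)).transpose_mul_mul_of_orthogonal hU
  have hSgΔ : Sg = U * Δ * Uᵀ + σ • 1 := by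
    rw [hSg, fromBlocks_add_smul_one_zero_smul_one,
      mul_add_smul_one_mul_transpose_of_orthogonal hUUt]
  have hSgAtil : Sg + Atil = U * fromBlocks Sg₁₁ M.toBlocks₁₂ M.toBlocks₂₁ M.toBlocks₂₂ * Uᵀ := by
    have hAtilM : Atil + σ • 1 = U * M * Uᵀ := by
      rw [hM, mul_transpose_mul_mul_mul_transpose_of_orthogonal hUUt]
    rw [← fromBlocks_sub_toBlocks₁₁_add, Matrix.mul_add, Matrix.add_mul, ← hAtilM, hSgΔ]
    abel
  have hPdet : IsUnit (fromBlocks Sg₁₁ M.toBlocks₁₂ M.toBlocks₂₁ M.toBlocks₂₂).det := by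
    rw [← fromBlocks_sub_toBlocks₁₁_add, ← isUnit_iff_isUnit_det]
    exact (PosDef.posSemidef_add hΔ hMpd).isUnit
  have hM₂₂ : IsUnit M.toBlocks₂₂.det :=
    (isUnit_iff_isUnit_det _).mp (hMpd.submatrix Sum.inr_injective).isUnit
  have hS := isUnit_det_sub_mul_inv_mul hPdet hM₂₂
  have hK : Gᵀ * (Sg + Atil)⁻¹ * G =
      Vᵀ * (Υ * (Sg₁₁ - M.toBlocks₁₂ * M.toBlocks₂₂⁻¹ * M.toBlocks₂₁)⁻¹ * Υ) * V := by
    rw [hSgAtil, hG, transpose_mul_inv_fromBlocks_mul_of_svd hU Υ V hPdet hM₂₂,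
      hΥdiag.isSymm.eq]
  refine ⟨?_, ?_, ?_⟩
  · rw [hSgΔ, add_sub_cancel_right]
    simpa using hΔ.mul_mul_conjTranspose_same U
  · rw [hK]
    exact isUnit_det_transpose_mul_mul_of_orthogonal hV hΥinv hS
  · rwa [hK, trace_inv_transpose_mul_mul_of_orthogonal hV hS]

/-- Paper's Theorem 5: the matrix `Σ` constructed from a feasible point of the
semi-definite program (30) is a feasible (relaxed) solution of the
privacy-constrained optimization problem (26). Here the ambient dimension is
`n = d + e` (so `d ≤ n`), realized by the index type `Fin d ⊕ Fin e`. -/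
theorem relaxed_solution_feasible
    (d e : ℕ) (hd : 0 < d)
    (σ γ : ℝ) (hσ : 0 < σ)
    (U : Matrix (Fin d ⊕ Fin e) (Fin d ⊕ Fin e) ℝ) (hU : Uᵀ * U = 1)
    (V : Matrix (Fin d) (Fin d) ℝ) (hV : Vᵀ * V = 1)
    (Υ : Matrix (Fin d) (Fin d) ℝ) (hΥdiag : Υ.IsDiag) (hΥinv : IsUnit Υ.det)
    (G : Matrix (Fin d ⊕ Fin e) (Fin d) ℝ)
    (hG : G = U * (Matrix.fromCols Υ (0 : Matrix (Fin d) (Fin e) ℝ))ᵀ * V)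
    (Atil : Matrix (Fin d ⊕ Fin e) (Fin d ⊕ Fin e) ℝ) (hAtil : Atil.PosSemidef)
    (M : Matrix (Fin d ⊕ Fin e) (Fin d ⊕ Fin e) ℝ)
    (hM : M = Uᵀ * (Atil + σ • (1 : Matrix (Fin d ⊕ Fin e) (Fin d ⊕ Fin e) ℝ)) * U)
    (Sg₁₁ : Matrix (Fin d) (Fin d) ℝ) (hSgsymm : Sg₁₁.IsSymm)
    (hSgA : (Sg₁₁ - M.toBlocks₁₁).PosSemidef)
    (htr : γ ≤ (Υ⁻¹ ^ 2 *
      (Sg₁₁ - M.toBlocks₁₂ * (M.toBlocks₂₂)⁻¹ * M.toBlocks₂₁)).trace)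
    (Sg : Matrix (Fin d ⊕ Fin e) (Fin d ⊕ Fin e) ℝ)
    (hSg : Sg = U * Matrix.fromBlocks
      (Sg₁₁ - M.toBlocks₁₁ + σ • (1 : Matrix (Fin d) (Fin d) ℝ)) 0 0
      (σ • (1 : Matrix (Fin e) (Fin e) ℝ)) * Uᵀ) :
    (Sg - σ • (1 : Matrix (Fin d ⊕ Fin e) (Fin d ⊕ Fin e) ℝ)).PosSemidef ∧
    IsUnit (Gᵀ * (Sg + Atil)⁻¹ * G).det ∧
    γ ≤ ((Gᵀ * (Sg + Atil)⁻¹ * G)⁻¹).trace :=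
  relaxed_solution_feasible_general d e σ γ hσ U hU V hV Υ hΥdiag hΥinv G hG Atil hAtil M hM Sg₁₁
    hSgA htr Sg hSg
end

section
/- Let n be a positive integer, P̂ ∈ ℝ^{n×n} a symmetric positive definite matrix, q, q' ∈ ℝ^n, ε ≥ 0, and Δ > 0 such that ‖q − q'‖_{P̂⁻¹} ≤ Δ. Then for every Borel set S ⊆ ℝ^n, ∫_S N(u; q, P̂) du ≤ e^{ε} ∫_S N(u; q', P̂) du + Q(ε/Δ − Δ/2). (Paper's Theorem 6: the Gaussian mechanism M(d) = q(d) + ω with ω ∼ N(0, P̂) and affine query q of sensitivity Δ = Δ_{P̂⁻¹}q is (ε, δ)-differentially private with δ = Q(ξ), ξ = −Δ/2 + ε/Δ; hence the proposed privacy-preserving state estimation algorithm ensures (ε, δ)-differential privacy.) -/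
open Matrix MeasureTheory

/-- The multivariate Gaussian density
`N(x; μ, Σ) = (2π)^{−n/2} det(Σ)^{−1/2} exp(−(1/2)(x−μ)ᵀΣ⁻¹(x−μ))`. -/
noncomputable def gaussianPdf (n : ℕ) (μ : Fin n → ℝ) (S : Matrix (Fin n) (Fin n) ℝ)
    (x : Fin n → ℝ) : ℝ :=
  (2 * Real.pi) ^ (-(n : ℝ) / 2) * S.det ^ (-(1 : ℝ) / 2) *
    Real.exp (-(1 / 2) * ((x - μ) ⬝ᵥ S⁻¹.mulVec (x - μ)))

/-- The standard Gaussian tail function `Q(ξ) = (1/√(2π)) ∫_ξ^∞ e^{−z²/2} dz`. -/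
noncomputable def gaussQ (ξ : ℝ) : ℝ :=
  (1 / Real.sqrt (2 * Real.pi)) * ∫ z in Set.Ioi ξ, Real.exp (-z ^ 2 / 2)

/-!
The privacy loss `log (N(u; q, P) / N(u; q', P))` is the affine function
`L u = ⟪P⁻¹ (q - q'), u - q⟫ + s / 2` with `s = ‖q - q'‖²_{P⁻¹}`. Off the half-space `{L > ε}`
the density at `q` is at most `e^ε` times the density at `q'`, so the two integrals over `S` differ
by at most the `N(q, P)`-mass of that half-space. Writing `u = q + C w` with `C Cᵀ = P` and `w`
standard normal, `L` becomes `s / 2` plus a centred Gaussian of variance `s`, so the half-space has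
mass `Q(ε / √s - √s / 2) ≤ Q(ε / Δ - Δ / 2)` as `√s ≤ Δ`.
-/

open ProbabilityTheory Set

lemma gaussQ_eq_gaussianReal_Ioi (ξ : ℝ) : gaussQ ξ = (gaussianReal 0 1 (Ioi ξ)).toReal := by
  rw [gaussianReal_apply_eq_integral _ one_ne_zero, ENNReal.toReal_ofReal
    (setIntegral_nonneg measurableSet_Ioi fun x _ => gaussianPDFReal_nonneg _ _ _), gaussQ,
    ← integral_const_mul]
  simp [gaussianPDFReal, neg_div]

lemma gaussQ_nonneg (ξ : ℝ) : 0 ≤ gaussQ ξ := by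
  rw [gaussQ_eq_gaussianReal_Ioi]
  exact ENNReal.toReal_nonneg

lemma gaussQ_antitone : Antitone gaussQ := fun x y hxy => by
  simp only [gaussQ_eq_gaussianReal_Ioi]
  exact ENNReal.toReal_mono (measure_ne_top _ _) (measure_mono (Ioi_subset_Ioi hxy))

lemma gaussianReal_Ioi_eq_gaussQ {σ : ℝ} (hσ : 0 < σ) (c : ℝ) :
    (gaussianReal 0 (σ ^ 2).toNNReal (Ioi c)).toReal = gaussQ (c / σ) := by
  have hscale : gaussianReal 0 (σ ^ 2).toNNReal = (gaussianReal 0 1).map (σ * ·) := by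
    rw [gaussianReal_map_const_mul]
    congr 1
    · simp
    · ext; simp [hσ.le]
  have hpre : (σ * ·) ⁻¹' Ioi c = Ioi (c / σ) := by
    ext x; simp [div_lt_iff₀ hσ, mul_comm]
  rw [hscale, Measure.map_apply (measurable_const_mul σ) measurableSet_Ioi, hpre,
    gaussQ_eq_gaussianReal_Ioi]

lemma pi_gaussianReal_eq_withDensity (ι : Type*) [Fintype ι] :
    Measure.pi (fun _ : ι => gaussianReal 0 1) =
      volume.withDensity fun w => ENNReal.ofReal (∏ i, gaussianPDFReal 0 1 (w i)) := by
  refine Measure.pi_eq fun s hs => ?_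
  have hint : Integrable (fun w : ι → ℝ => ∏ i, gaussianPDFReal 0 1 (w i)) :=
    Integrable.fintype_prod fun _ => integrable_gaussianPDFReal 0 1
  rw [withDensity_apply _ (.univ_pi hs), ← ofReal_integral_eq_lintegral_ofReal hint.integrableOn
    (.of_forall fun w => Finset.prod_nonneg fun i _ => gaussianPDFReal_nonneg _ _ _),
    volume_pi, Measure.restrict_pi_pi, integral_fintype_prod_eq_prod,
    ENNReal.ofReal_prod_of_nonneg fun i _ => setIntegral_nonneg (hs i) fun _ _ =>
      gaussianPDFReal_nonneg _ _ _]
  simp_rw [gaussianReal_apply_eq_integral _ one_ne_zero]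

lemma map_dotProduct_pi_gaussianReal {ι : Type*} [Fintype ι] (b : ι → ℝ) :
    (Measure.pi fun _ : ι => gaussianReal 0 1).map (b ⬝ᵥ ·) =
      gaussianReal 0 (b ⬝ᵥ b).toNNReal := by
  have hL : (b ⬝ᵥ ·) = innerSL ℝ (WithLp.toLp 2 b) ∘ WithLp.toLp 2 := by
    ext w; simp [dotProduct, PiLp.inner_apply, mul_comm]
  rw [hL, ← Measure.map_map (by fun_prop) (by fun_prop), map_pi_eq_stdGaussian,
    IsGaussian.map_eq_gaussianReal, integral_strongDual_stdGaussian, variance_dual_stdGaussian,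
    innerSL_apply_norm, EuclideanSpace.real_norm_sq_eq]
  simp [dotProduct, sq]

lemma setIntegral_le_mul_setIntegral_add {α : Type*} [MeasurableSpace α] {μ : Measure α}
    {f g : α → ℝ} (hf : Integrable f μ) (hg : Integrable g μ) (hf0 : 0 ≤ f) (hg0 : 0 ≤ g)
    {T : Set α} (hT : MeasurableSet T) {c : ℝ} (hc : 0 ≤ c) (hfg : ∀ x ∉ T, f x ≤ c * g x)
    (S : Set α) :
    ∫ x in S, f x ∂μ ≤ c * ∫ x in S, g x ∂μ + ∫ x in T, f x ∂μ := by
  have hpt : ∀ x, f x ≤ c * g x + T.indicator f x := by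
    intro x
    by_cases hx : x ∈ T
    · rw [indicator_of_mem hx]
      exact le_add_of_nonneg_left (mul_nonneg hc (hg0 x))
    · simpa [indicator_of_notMem hx] using hfg x hx
  have hfT : Integrable (T.indicator f) μ := hf.indicator hT
  calc ∫ x in S, f x ∂μ ≤ ∫ x in S, (c * g x + T.indicator f x) ∂μ :=
        integral_mono hf.integrableOn ((hg.const_mul c).add hfT).integrableOn hpt
    _ = c * ∫ x in S, g x ∂μ + ∫ x in S, T.indicator f x ∂μ := by
        rw [integral_add (hg.const_mul c).integrableOn hfT.integrableOn, integral_const_mul]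
    _ ≤ c * ∫ x in S, g x ∂μ + ∫ x in T, f x ∂μ := by
        grw [setIntegral_le_integral hfT (.of_forall (indicator_nonneg fun y _ => hf0 y)),
          integral_indicator hT]

open scoped MatrixOrder in
lemma Matrix.PosDef.exists_mul_transpose_eq {ι : Type*} [Fintype ι] [DecidableEq ι]
    {P : Matrix ι ι ℝ} (hP : P.PosDef) : ∃ C : Matrix ι ι ℝ, C * Cᵀ = P ∧ C.det ≠ 0 := by
  obtain ⟨B, hB⟩ := CStarAlgebra.nonneg_iff_eq_star_mul_self.mp hP.posSemidef.nonneg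
  have hBP : Bᵀ * Bᵀᵀ = P := by
    rw [hB, transpose_transpose, star_eq_conjTranspose,
      conjTranspose_eq_transpose_of_trivial]
  refine ⟨Bᵀ, hBP, fun h => hP.det_pos.ne' ?_⟩
  rw [← hBP, det_mul, h, zero_mul]

lemma Matrix.IsSymm.dotProduct_mulVec_comm {ι : Type*} [Fintype ι] {M : Matrix ι ι ℝ}
    (hM : M.IsSymm) (x y : ι → ℝ) : x ⬝ᵥ M *ᵥ y = y ⬝ᵥ M *ᵥ x := by
  rw [dotProduct_mulVec, ← mulVec_transpose, hM.eq, dotProduct_comm]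

lemma dotProduct_inv_mulVec_of_mul_transpose {ι : Type*} [Fintype ι] [DecidableEq ι]
    {C P : Matrix ι ι ℝ} (hC : C * Cᵀ = P) (hdet : C.det ≠ 0) (w : ι → ℝ) :
    (C *ᵥ w) ⬝ᵥ P⁻¹ *ᵥ (C *ᵥ w) = w ⬝ᵥ w := by
  have hu : IsUnit C.det := hdet.isUnit
  rw [← hC, Matrix.mul_inv_rev, mulVec_mulVec, mul_assoc, nonsing_inv_mul _ hu,
    mul_one, dotProduct_mulVec, ← transpose_nonsing_inv,
    vecMul_transpose, mulVec_mulVec, nonsing_inv_mul _ hu, one_mulVec]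

lemma map_add_mulVec_volume {ι : Type*} [Fintype ι] [DecidableEq ι] {C : Matrix ι ι ℝ}
    (hC : C.det ≠ 0) (q : ι → ℝ) :
    volume.map (fun w => q + C *ᵥ w) = ENNReal.ofReal |C.det|⁻¹ • volume := by
  have hcomp : (fun w => q + C *ᵥ w) = (q + ·) ∘ toLin' C := rfl
  rw [hcomp, ← Measure.map_map (measurable_const_add q) (LinearMap.continuous_on_pi _).measurable,
    Real.map_matrix_volume_pi_eq_smul_volume_pi hC, Measure.map_smul, map_add_left_eq_self, abs_inv]

lemma two_pi_rpow_neg_div_two (n : ℕ) :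
    (2 * Real.pi) ^ (-(n : ℝ) / 2) = (Real.sqrt (2 * Real.pi))⁻¹ ^ n := by
  rw [Real.sqrt_eq_rpow, ← Real.rpow_neg (by positivity), ← Real.rpow_natCast,
    ← Real.rpow_mul (by positivity)]
  ring_nf

section gaussianPdf

variable {n : ℕ} {C P : Matrix (Fin n) (Fin n) ℝ}

lemma measurable_gaussianPdf (q : Fin n → ℝ) : Measurable (gaussianPdf n q P) := by
  unfold gaussianPdf; fun_prop

lemma gaussianPdf_nonneg (hP : 0 ≤ P.det) (q u : Fin n → ℝ) : 0 ≤ gaussianPdf n q P u := by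
  unfold gaussianPdf; positivity

lemma gaussianPdf_add_mulVec (hC : C * Cᵀ = P) (hdet : C.det ≠ 0) (q w : Fin n → ℝ) :
    gaussianPdf n q P (q + C *ᵥ w) = |C.det|⁻¹ * ∏ i, gaussianPDFReal 0 1 (w i) := by
  have hPdet : P.det = C.det * C.det := by rw [← hC, det_mul, det_transpose]
  have hdetP : P.det ^ (-(1 : ℝ) / 2) = |C.det|⁻¹ := by
    rw [hPdet, neg_div, Real.rpow_neg (mul_self_nonneg _), ← Real.sqrt_eq_rpow,
      Real.sqrt_mul_self_eq_abs]
  simp only [gaussianPdf, add_sub_cancel_left, dotProduct_inv_mulVec_of_mul_transpose hC hdet,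
    hdetP, two_pi_rpow_neg_div_two, gaussianPDFReal, Finset.prod_mul_distrib, Finset.prod_const,
    Finset.card_univ, Fintype.card_fin, ← Real.exp_sum, NNReal.coe_one, mul_one, sub_zero]
  have hquad : -(1 / 2) * w ⬝ᵥ w = ∑ i, -w i ^ 2 / 2 := by
    simp only [dotProduct, Finset.mul_sum]
    exact Finset.sum_congr rfl fun i _ => by ring
  rw [hquad]
  ring

lemma withDensity_gaussianPdf_eq_map (hC : C * Cᵀ = P) (hdet : C.det ≠ 0) (q : Fin n → ℝ) :
    volume.withDensity (fun u => ENNReal.ofReal (gaussianPdf n q P u)) =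
      (Measure.pi fun _ => gaussianReal 0 1).map (fun w => q + C *ᵥ w) := by
  have hT : Measurable (fun w : Fin n → ℝ => q + C *ᵥ w) := by fun_prop
  have hvol : (volume : Measure (Fin n → ℝ)) =
      ENNReal.ofReal |C.det| • volume.map (fun w => q + C *ᵥ w) := by
    rw [map_add_mulVec_volume hdet, smul_smul, ← ENNReal.ofReal_mul (abs_nonneg _),
      mul_inv_cancel₀ (abs_ne_zero.mpr hdet), ENNReal.ofReal_one, one_smul]
  ext A hA
  rw [pi_gaussianReal_eq_withDensity, Measure.map_apply hT hA, withDensity_apply _ (hT hA),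
    withDensity_apply _ hA]
  conv_lhs => rw [hvol]
  rw [Measure.restrict_smul, lintegral_smul_measure,
    setLIntegral_map hA (measurable_gaussianPdf (P := P) q).ennreal_ofReal hT, smul_eq_mul,
    ← lintegral_const_mul' _ _ ENNReal.ofReal_ne_top]
  refine setLIntegral_congr_fun (hT hA) fun w _ => ?_
  rw [← ENNReal.ofReal_mul (abs_nonneg _), gaussianPdf_add_mulVec hC hdet, ← mul_assoc,
    mul_inv_cancel₀ (abs_ne_zero.mpr hdet), one_mul]

lemma integrable_gaussianPdf (hP : P.PosDef) (q : Fin n → ℝ) :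
    Integrable (gaussianPdf n q P) := by
  obtain ⟨C, hC, hdet⟩ := hP.exists_mul_transpose_eq
  refine ⟨(measurable_gaussianPdf (P := P) q).aestronglyMeasurable,
    (hasFiniteIntegral_iff_ofReal (.of_forall (gaussianPdf_nonneg hP.det_pos.le q))).2 ?_⟩
  rw [← setLIntegral_univ, ← withDensity_apply _ .univ, withDensity_gaussianPdf_eq_map hC hdet]
  exact measure_lt_top _ _

lemma setIntegral_gaussianPdf_halfspace (hP : P.PosDef) (q : Fin n → ℝ) {a : Fin n → ℝ}
    (ha : a ≠ 0) (c : ℝ) :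
    ∫ u in {u | c < a ⬝ᵥ (u - q)}, gaussianPdf n q P u = gaussQ (c / √(a ⬝ᵥ P *ᵥ a)) := by
  obtain ⟨C, hC, hdet⟩ := hP.exists_mul_transpose_eq
  have hH : MeasurableSet {u | c < a ⬝ᵥ (u - q)} := measurableSet_lt measurable_const (by fun_prop)
  have hpre : (fun w => q + C *ᵥ w) ⁻¹' {u | c < a ⬝ᵥ (u - q)} = (Cᵀ *ᵥ a ⬝ᵥ ·) ⁻¹' Ioi c := by
    ext w
    simp [dotProduct_mulVec, mulVec_transpose]
  have hpos : 0 < a ⬝ᵥ P *ᵥ a := by simpa using hP.dotProduct_mulVec_pos ha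
  have hvar : Cᵀ *ᵥ a ⬝ᵥ Cᵀ *ᵥ a = √(a ⬝ᵥ P *ᵥ a) ^ 2 := by
    rw [Real.sq_sqrt hpos.le, ← hC, ← mulVec_mulVec, dotProduct_mulVec,
      ← mulVec_transpose, transpose_transpose, dotProduct_comm]
  rw [integral_eq_lintegral_of_nonneg_ae (.of_forall (gaussianPdf_nonneg hP.det_pos.le q))
      (measurable_gaussianPdf (P := P) q).aestronglyMeasurable, ← withDensity_apply _ hH,
    withDensity_gaussianPdf_eq_map hC hdet, Measure.map_apply (by fun_prop) hH, hpre,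
    ← Measure.map_apply (by fun_prop) measurableSet_Ioi, map_dotProduct_pi_gaussianReal, hvar,
    gaussianReal_Ioi_eq_gaussQ (Real.sqrt_pos.2 hpos)]

lemma gaussianPdf_eq_exp_mul (hP : P.IsSymm) (q q' u : Fin n → ℝ) :
    gaussianPdf n q P u = Real.exp ((P⁻¹ *ᵥ (q - q')) ⬝ᵥ (u - q) +
      (q - q') ⬝ᵥ P⁻¹ *ᵥ (q - q') / 2) * gaussianPdf n q' P u := by
  have hsymm := hP.inv.dotProduct_mulVec_comm (u - q) (q - q')
  have hexp : -(1 / 2) * ((u - q) ⬝ᵥ P⁻¹ *ᵥ (u - q)) =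
      (P⁻¹ *ᵥ (q - q')) ⬝ᵥ (u - q) + (q - q') ⬝ᵥ P⁻¹ *ᵥ (q - q') / 2 +
        -(1 / 2) * ((u - q') ⬝ᵥ P⁻¹ *ᵥ (u - q')) := by
    rw [show u - q' = (u - q) + (q - q') by abel, mulVec_add, dotProduct_add,
      add_dotProduct, add_dotProduct, dotProduct_comm (P⁻¹ *ᵥ _), hsymm]
    ring
  simp only [gaussianPdf, hexp, Real.exp_add]
  ring

lemma setIntegral_gaussianPdf_privacyLoss_gt_le (hP : P.PosDef) (q q' : Fin n → ℝ) {ε Δ : ℝ}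
    (hε : 0 ≤ ε) (hsens : √((q - q') ⬝ᵥ P⁻¹ *ᵥ (q - q')) ≤ Δ) :
    ∫ u in {u | ε < (P⁻¹ *ᵥ (q - q')) ⬝ᵥ (u - q) + (q - q') ⬝ᵥ P⁻¹ *ᵥ (q - q') / 2},
      gaussianPdf n q P u ≤ gaussQ (ε / Δ - Δ / 2) := by
  set d := q - q'
  set a := P⁻¹ *ᵥ d
  set s := d ⬝ᵥ P⁻¹ *ᵥ d
  rcases eq_or_ne d 0 with hd | hd
  · have hempty : {u | ε < a ⬝ᵥ (u - q) + s / 2} = ∅ := by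
      ext u; simp [a, s, hd, hε]
    rw [hempty, Measure.restrict_empty, integral_zero_measure]
    exact gaussQ_nonneg _
  have hs : 0 < s := by simpa using hP.inv.dotProduct_mulVec_pos hd
  have ha : a ≠ 0 := fun ha => hs.ne' (by rw [show s = d ⬝ᵥ a from rfl, ha, dotProduct_zero])
  have haPa : a ⬝ᵥ P *ᵥ a = s := by
    rw [mulVec_mulVec, mul_nonsing_inv _ hP.det_pos.ne'.isUnit, one_mulVec, dotProduct_comm]
  have hset : {u | ε < a ⬝ᵥ (u - q) + s / 2} = {u | ε - s / 2 < a ⬝ᵥ (u - q)} := by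
    ext u; exact (sub_lt_iff_lt_add (a := ε)).symm
  set σ := √s
  have hσ : 0 < σ := Real.sqrt_pos.2 hs
  have hξ : ε / Δ - Δ / 2 ≤ (ε - s / 2) / σ := by
    have hεΔ : ε / Δ ≤ ε / σ := div_le_div_of_nonneg_left hε hσ hsens
    rw [← Real.sq_sqrt hs.le, sub_div, pow_two, mul_div_assoc, mul_div_cancel_left₀ _ hσ.ne']
    linarith
  rw [hset, setIntegral_gaussianPdf_halfspace hP q ha, haPa]
  exact gaussQ_antitone hξ

end gaussianPdf

theorem gaussian_mechanism_differential_privacy_general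
    (n : ℕ)
    (P : Matrix (Fin n) (Fin n) ℝ) (hP : P.PosDef)
    (q q' : Fin n → ℝ) (ε Δ : ℝ) (hε : 0 ≤ ε)
    (hsens : Real.sqrt ((q - q') ⬝ᵥ P⁻¹.mulVec (q - q')) ≤ Δ)
    (S : Set (Fin n → ℝ)) :
    (∫ u in S, gaussianPdf n q P u) ≤
      Real.exp ε * (∫ u in S, gaussianPdf n q' P u) + gaussQ (ε / Δ - Δ / 2) := by
  set L : (Fin n → ℝ) → ℝ := fun u =>
    (P⁻¹ *ᵥ (q - q')) ⬝ᵥ (u - q) + (q - q') ⬝ᵥ P⁻¹ *ᵥ (q - q') / 2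
  have hloss : ∀ u ∉ {u | ε < L u}, gaussianPdf n q P u ≤ Real.exp ε * gaussianPdf n q' P u := by
    intro u hu
    rw [gaussianPdf_eq_exp_mul (isHermitian_iff_isSymm.mp hP.isHermitian) q q' u]
    exact mul_le_mul_of_nonneg_right (Real.exp_le_exp.mpr (not_lt.mp hu))
      (gaussianPdf_nonneg hP.det_pos.le q' u)
  calc (∫ u in S, gaussianPdf n q P u)
      ≤ Real.exp ε * (∫ u in S, gaussianPdf n q' P u) + ∫ u in {u | ε < L u}, gaussianPdf n q P u :=
        setIntegral_le_mul_setIntegral_add (integrable_gaussianPdf hP q)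
          (integrable_gaussianPdf hP q') (gaussianPdf_nonneg hP.det_pos.le q)
          (gaussianPdf_nonneg hP.det_pos.le q') (measurableSet_lt measurable_const (by fun_prop))
          (Real.exp_pos ε).le hloss S
    _ ≤ _ := by grw [setIntegral_gaussianPdf_privacyLoss_gt_le hP q q' hε hsens]

/-- Paper's Theorem 6: the Gaussian mechanism with covariance `P̂` and affine
query of sensitivity `Δ = ‖q − q'‖_{P̂⁻¹}` is `(ε, δ)`-differentially private
with `δ = Q(ε/Δ − Δ/2)`: for every Borel set `S`,
`∫_S N(u; q, P̂) du ≤ e^ε ∫_S N(u; q', P̂) du + Q(ε/Δ − Δ/2)`. -/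
theorem gaussian_mechanism_differential_privacy
    (n : ℕ) (hn : 0 < n)
    (P : Matrix (Fin n) (Fin n) ℝ) (hP : P.PosDef)
    (q q' : Fin n → ℝ) (ε Δ : ℝ) (hε : 0 ≤ ε) (hΔ : 0 < Δ)
    (hsens : Real.sqrt ((q - q') ⬝ᵥ P⁻¹.mulVec (q - q')) ≤ Δ)
    (S : Set (Fin n → ℝ)) (hS : MeasurableSet S) :
    (∫ u in S, gaussianPdf n q P u) ≤
      Real.exp ε * (∫ u in S, gaussianPdf n q' P u) + gaussQ (ε / Δ - Δ / 2) :=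
  gaussian_mechanism_differential_privacy_general n P hP q q' ε Δ hε hsens S
end
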